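/- arXiv:1907.00547 — 4 statements merged into one kernel-verified Lean document; each statement's English description precedes it below -/
import Mathlib

section
/- Let g ≥ 0 be an integer, let n ≥ 1 be an odd integer, and let ε ∈ {1, −1}. Suppose B_1, …, B_{2g}, C_1, …, C_n are elements of SU(2) (2×2 complex special unitary matrices) satisfying [B_1,B_{g+1}]·[B_2,B_{g+2}]⋯[B_g,B_{2g}]·C_1⋯C_n = ε·I and C_i² = −I for every i = 1, …, n. Then there is no nonzero vector v ∈ ℂ² that is a common eigenvector of all the matrices B_1, …, B_{2g}, C_1, …, C_n; equivalently, no one-dimensional complex subspace of ℂ² is invariant under all of them. -/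
/-!
A common eigenvector `v` of all the matrices turns the relation into a relation among their
eigenvalues. Every commutator `[B_i, B_{g+i}]` fixes `v`, so `C_1 ⋯ C_n v = ε v`, i.e. `ε` is the
product of the eigenvalues `μ_j` of the `C_j` on `v`. From `C_j² = -I` we get `μ_j² = -1`, hence
`ε² = (-1)ⁿ = -1` since `n` is odd, contradicting `ε = ±1`.
-/

namespace Matrix

section CommSemiring

variable {ι R : Type*} [Fintype ι] [CommSemiring R] {v : ι → R}

theorem mul_mulVec_eq_smul {A B : Matrix ι ι R} {a b : R}
    (hA : A *ᵥ v = a • v) (hB : B *ᵥ v = b • v) : (A * B) *ᵥ v = (a * b) • v := by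
  rw [← mulVec_mulVec, hB, mulVec_smul, hA, smul_smul, mul_comm]

theorem ofFn_prod_mulVec_eq_smul [DecidableEq ι] {k : ℕ} {M : Fin k → Matrix ι ι R}
    {μ : Fin k → R} (hM : ∀ i, M i *ᵥ v = μ i • v) :
    (List.ofFn M).prod *ᵥ v = (∏ i, μ i) • v := by
  induction k with
  | zero => simp
  | succ k ih =>
    rw [List.ofFn_succ, List.prod_cons, Fin.prod_univ_succ]
    exact mul_mulVec_eq_smul (hM 0) (ih fun i => hM i.succ)

end CommSemiring

section Field

variable {ι K : Type*} [Fintype ι] [DecidableEq ι] [Field K] {v : ι → K}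

theorem eigenvalue_ne_zero_of_isUnit_det {A : Matrix ι ι K} {a : K} (hA : IsUnit A.det)
    (hv : v ≠ 0) (hAv : A *ᵥ v = a • v) : a ≠ 0 := by
  rintro rfl
  rw [zero_smul] at hAv
  exact hA.ne_zero (exists_mulVec_eq_zero_iff.mp ⟨v, hv, hAv⟩)

theorem inv_mulVec_eq_inv_smul {A : Matrix ι ι K} {a : K} (hA : IsUnit A.det) (hv : v ≠ 0)
    (hAv : A *ᵥ v = a • v) : A⁻¹ *ᵥ v = a⁻¹ • v := by
  have ha := eigenvalue_ne_zero_of_isUnit_det hA hv hAv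
  calc A⁻¹ *ᵥ v = A⁻¹ *ᵥ (a⁻¹ • A *ᵥ v) := by rw [hAv, smul_smul, inv_mul_cancel₀ ha, one_smul]
    _ = a⁻¹ • v := by rw [mulVec_smul, mulVec_mulVec, nonsing_inv_mul A hA, one_mulVec]

theorem commutator_mulVec_eq_self {A B : Matrix ι ι K} {a b : K} (hA : IsUnit A.det)
    (hB : IsUnit B.det) (hv : v ≠ 0) (hAv : A *ᵥ v = a • v) (hBv : B *ᵥ v = b • v) :
    (A * B * A⁻¹ * B⁻¹) *ᵥ v = v := by
  have ha := eigenvalue_ne_zero_of_isUnit_det hA hv hAv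
  have hb := eigenvalue_ne_zero_of_isUnit_det hB hv hBv
  rw [mul_mulVec_eq_smul (mul_mulVec_eq_smul (mul_mulVec_eq_smul hAv hBv)
      (inv_mulVec_eq_inv_smul hA hv hAv)) (inv_mulVec_eq_inv_smul hB hv hBv)]
  field_simp
  rw [one_smul]

theorem eigenvalue_sq_eq_neg_one {A : Matrix ι ι K} {a : K} (hA : A ^ 2 = -1) (hv : v ≠ 0)
    (hAv : A *ᵥ v = a • v) : a ^ 2 = -1 := by
  have h := mul_mulVec_eq_smul hAv hAv
  rw [← sq, ← sq, hA, neg_mulVec, one_mulVec, ← neg_one_smul K v] at h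
  exact smul_left_injective K hv h.symm

end Field

end Matrix

theorem Finset.prod_sq_eq_neg_one_of_odd {M : Type*} [CommMonoid M] [HasDistribNeg M] {n : ℕ}
    (hn : Odd n) {μ : Fin n → M} (hμ : ∀ i, μ i ^ 2 = -1) : (∏ i, μ i) ^ 2 = -1 := by
  rw [← Finset.prod_pow, Finset.prod_congr rfl fun i _ => hμ i, Finset.prod_const,
    Finset.card_univ, Fintype.card_fin, hn.neg_one_pow]

open Matrix in
theorem no_common_eigenvector_of_traceless_punctured_surface_rep_general
    (g n : ℕ) (hodd : Odd n) (ε : ℂ) (hε : ε = 1 ∨ ε = -1)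
    (B : Fin (g + g) → Matrix (Fin 2) (Fin 2) ℂ)
    (C : Fin n → Matrix (Fin 2) (Fin 2) ℂ)
    (hB : ∀ i, B i ∈ Matrix.specialUnitaryGroup (Fin 2) ℂ)
    (hC2 : ∀ j, C j ^ 2 = -1)
    (hrel :
      (List.ofFn fun i : Fin g =>
          B (Fin.castAdd g i) * B (Fin.natAdd g i) *
            (B (Fin.castAdd g i))⁻¹ * (B (Fin.natAdd g i))⁻¹).prod *
        (List.ofFn C).prod = ε • (1 : Matrix (Fin 2) (Fin 2) ℂ)) :
    ¬ ∃ v : Fin 2 → ℂ, v ≠ 0 ∧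
        (∀ i, ∃ μ : ℂ, (B i).mulVec v = μ • v) ∧
        (∀ j, ∃ μ : ℂ, (C j).mulVec v = μ • v) := by
  rintro ⟨v, hv, hBv, hCv⟩
  choose β hβ using hBv
  choose μ hμ using hCv
  have hBdet i : IsUnit (B i).det := by
    rw [(mem_specialUnitaryGroup_iff.mp (hB i)).2]
    exact isUnit_one
  have hcomm : (List.ofFn fun i : Fin g =>
      B (Fin.castAdd g i) * B (Fin.natAdd g i) *
        (B (Fin.castAdd g i))⁻¹ * (B (Fin.natAdd g i))⁻¹).prod *ᵥ v = (∏ _ : Fin g, 1 : ℂ) • v :=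
    ofFn_prod_mulVec_eq_smul fun i =>
      (commutator_mulVec_eq_self (hBdet _) (hBdet _) hv (hβ _) (hβ _)).trans (one_smul ℂ v).symm
  have hεv := mul_mulVec_eq_smul hcomm (ofFn_prod_mulVec_eq_smul hμ)
  rw [hrel, smul_mulVec, one_mulVec, Finset.prod_const_one, one_mul] at hεv
  have hεμ : ε = ∏ j, μ j := smul_left_injective ℂ hv hεv
  have hsq : ε ^ 2 = -1 :=
    hεμ ▸ Finset.prod_sq_eq_neg_one_of_odd hodd fun j => eigenvalue_sq_eq_neg_one (hC2 j) hv (hμ j)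
  rcases hε with rfl | rfl <;> norm_num at hsq

/-- **Irreducibility of points of the representation varieties `R_{g,n}` and `R'_{g,n}`.**
If `B_1, …, B_{2g}, C_1, …, C_n ∈ SU(2)` (with `n ≥ 1` odd) satisfy
`[B_1,B_{g+1}] ⋯ [B_g,B_{2g}] C_1 ⋯ C_n = ε·I` with `ε = ±1` and `C_i^2 = -I` for all `i`,
then the matrices `B_1, …, B_{2g}, C_1, …, C_n` admit no common eigenvector `0 ≠ v ∈ ℂ²`. -/
theorem no_common_eigenvector_of_traceless_punctured_surface_rep
    (g n : ℕ) (hn : 1 ≤ n) (hodd : Odd n) (ε : ℂ) (hε : ε = 1 ∨ ε = -1)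
    (B : Fin (g + g) → Matrix (Fin 2) (Fin 2) ℂ)
    (C : Fin n → Matrix (Fin 2) (Fin 2) ℂ)
    (hB : ∀ i, B i ∈ Matrix.specialUnitaryGroup (Fin 2) ℂ)
    (hC : ∀ j, C j ∈ Matrix.specialUnitaryGroup (Fin 2) ℂ)
    (hC2 : ∀ j, C j ^ 2 = -1)
    (hrel :
      (List.ofFn fun i : Fin g =>
          B (Fin.castAdd g i) * B (Fin.natAdd g i) *
            (B (Fin.castAdd g i))⁻¹ * (B (Fin.natAdd g i))⁻¹).prod *
        (List.ofFn C).prod = ε • (1 : Matrix (Fin 2) (Fin 2) ℂ)) :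
    ¬ ∃ v : Fin 2 → ℂ, v ≠ 0 ∧
        (∀ i, ∃ μ : ℂ, (B i).mulVec v = μ • v) ∧
        (∀ j, ∃ μ : ℂ, (C j).mulVec v = μ • v) :=
  no_common_eigenvector_of_traceless_punctured_surface_rep_general g n hodd ε hε B C hB hC2 hrel
end

section
/- Fix an integer m. In the polynomial ring ℂ[α, β, γ], graded by assigning the weights deg α = 2, deg β = 4, deg γ = 6, define polynomials ξ_k by ξ₀ = 1, ξ₁ = α, ξ₂ = α²/2 + (m−1)β/2, and, for k ≥ 2, ξ_{k+1} = (α·ξ_k + (m−k)·β·ξ_{k−1} − (γ/2)·ξ_{k−2})/(k+1). Then for every k ≥ 0 the polynomial ξ_k is weighted-homogeneous of total degree 2k, and the coefficient of the monomial α^k in ξ_k equals 1/k!. -/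
/-! Every term of the recursion for `ξ_{k+3}` is a variable times an earlier `ξ`, and the weights
`2, 4, 6` of `α, β, γ` make up exactly the missing degree. Only the term `α · ξ_{k+2}` can contain
a pure power of `α`, so the `α^k`-coefficients obey `c_{k+3} = c_{k+2} / (k + 3)`. -/

open MvPolynomial

/-- The polynomials `ξ_k ∈ ℂ[α, β, γ]` (variables `X 0 = α`, `X 1 = β`, `X 2 = γ`),
defined by `ξ₀ = 1`, `ξ₁ = α`, `ξ₂ = α²/2 + (m−1)β/2` and the recursion
`ξ_{k+3} = (α·ξ_{k+2} + (m−(k+2))·β·ξ_{k+1} − (γ/2)·ξ_k)/(k+3)`. -/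
noncomputable def mumfordXi (m : ℤ) : ℕ → MvPolynomial (Fin 3) ℂ
  | 0 => 1
  | 1 => X 0
  | 2 => (2 : ℂ)⁻¹ • (X 0 ^ 2) + (((m : ℂ) - 1) / 2) • X 1
  | (k + 3) =>
      ((k : ℂ) + 3)⁻¹ •
        (X 0 * mumfordXi m (k + 2)
          + ((m : ℂ) - ((k : ℂ) + 2)) • (X 1 * mumfordXi m (k + 1))
          - (2 : ℂ)⁻¹ • (X 2 * mumfordXi m k))

namespace MvPolynomial

variable {R σ M : Type*} [CommSemiring R]

theorem IsWeightedHomogeneous.smul [AddCommMonoid M] {w : σ → M} {φ : MvPolynomial σ R} {n : M}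
    (hφ : IsWeightedHomogeneous w φ n) (r : R) : IsWeightedHomogeneous w (r • φ) n := by
  rw [smul_eq_C_mul]
  exact hφ.C_mul r

theorem IsWeightedHomogeneous.X_mul [AddCommMonoid M] {w : σ → M} {φ : MvPolynomial σ R}
    {n m : M} (hφ : IsWeightedHomogeneous w φ n) (i : σ) (hm : w i + n = m) :
    IsWeightedHomogeneous w (X i * φ) m :=
  hm ▸ (isWeightedHomogeneous_X R w i).mul hφ

theorem coeff_single_succ_X_mul (i : σ) (n : ℕ) (φ : MvPolynomial σ R) :
    coeff (Finsupp.single i (n + 1)) (X i * φ) = coeff (Finsupp.single i n) φ := by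
  rw [add_comm, Finsupp.single_add, coeff_X_mul]

theorem coeff_single_X_mul_of_ne {i j : σ} (hij : j ≠ i) (n : ℕ) (φ : MvPolynomial σ R) :
    coeff (Finsupp.single i n) (X j * φ) = 0 := by
  classical
  rw [coeff_X_mul', if_neg]
  exact fun hj => hij (Finsupp.mem_support_single j i n |>.mp hj).1

end MvPolynomial

theorem isWeightedHomogeneous_mumfordXi (m : ℤ) (k : ℕ) :
    IsWeightedHomogeneous ![2, 4, 6] (mumfordXi m k) (2 * k) := by
  induction k using mumfordXi.induct with
  | case1 => exact isWeightedHomogeneous_one ℂ _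
  | case2 => exact isWeightedHomogeneous_X ℂ _ 0
  | case3 =>
    have hα : IsWeightedHomogeneous ![2, 4, 6] (X 0 : MvPolynomial (Fin 3) ℂ) 2 :=
      isWeightedHomogeneous_X ℂ _ 0
    have hβ : IsWeightedHomogeneous ![2, 4, 6] (X 1 : MvPolynomial (Fin 3) ℂ) 4 :=
      isWeightedHomogeneous_X ℂ _ 1
    exact ((hα.pow 2).smul _).add (hβ.smul _)
  | case4 k h₂ h₁ h₀ =>
    refine ((((h₂.X_mul 0 ?_).add ((h₁.X_mul 1 ?_).smul _)).sub ((h₀.X_mul 2 ?_).smul _)).smul _)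
    all_goals
      simp only [Nat.succ_eq_add_one, Matrix.cons_val, Matrix.cons_val_zero, Matrix.cons_val_one]
      ring

theorem coeff_single_zero_mumfordXi (m : ℤ) (k : ℕ) :
    coeff (Finsupp.single 0 k) (mumfordXi m k) = (k.factorial : ℂ)⁻¹ := by
  induction k using mumfordXi.induct with
  | case1 => simp [mumfordXi]
  | case2 => simp [mumfordXi]
  | case3 =>
    simp [mumfordXi, coeff_X_pow, coeff_X, Finsupp.single_eq_single_iff, Nat.factorial]
  | case4 k h₂ _ _ =>
    rw [mumfordXi, coeff_smul, coeff_sub, coeff_add, coeff_smul, coeff_smul,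
      coeff_single_succ_X_mul, h₂, coeff_single_X_mul_of_ne (by decide),
      coeff_single_X_mul_of_ne (by decide), Nat.factorial_succ (k + 2),
      Nat.cast_mul, mul_inv]
    push_cast
    ring

/-- **Homogeneity and leading coefficient of the Mumford relation polynomials.**
Give `ℂ[α, β, γ]` the grading with `deg α = 2`, `deg β = 4`, `deg γ = 6`.  Then each `ξ_k`
is weighted-homogeneous of total degree `2k`, and the coefficient of `α^k` in `ξ_k`
equals `1/k!`. -/
theorem mumfordXi_isWeightedHomogeneous_and_leadingCoeff (m : ℤ) (k : ℕ) :
    IsWeightedHomogeneous (![2, 4, 6] : Fin 3 → ℕ) (mumfordXi m k) (2 * k) ∧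
      coeff (Finsupp.single (0 : Fin 3) k) (mumfordXi m k) = ((k.factorial : ℂ))⁻¹ :=
  ⟨isWeightedHomogeneous_mumfordXi m k, coeff_single_zero_mumfordXi m k⟩
end

section
/- Let g ≥ 1 be an integer and work in the exterior algebra Λ(ℂ^{4g}) over ℂ, with the standard basis vectors of ℂ^{4g} labelled d_1, …, d_{2g}, ψ_1, …, ψ_{2g}. Set A := Σ_{j=1}^g d_j∧d_{j+g}, B := Σ_{j=1}^g (−d_j∧ψ_{j+g} + d_{j+g}∧ψ_j), γ := Σ_{j=1}^g ψ_j∧ψ_{j+g}, and ω := d_1∧d_{g+1}∧d_2∧d_{g+2}∧⋯∧d_g∧d_{2g}. Then for all nonnegative integers r, s: (i) if 2r + s = 2g, then s is necessarily even, say s = 2p, and (A^r/r!)∧(B^s/s!) = ω∧((−γ)^p/p!); (ii) if 2r + s > 2g, then A^r∧B^s = 0; (iii) if 2r + s < 2g, then in the unique expansion of (A^r/r!)∧(B^s/s!) as Σ_I d_I∧x_I over subsets I ⊆ {1,…,2g} (where d_I is the wedge of the corresponding d-generators and x_I lies in the subalgebra generated by ψ_1,…,ψ_{2g}), the coefficient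 of the monomial ω is 0. -/
/-!
Every product `ι u * ι v` of two generators is central, so `A`, `B` and `γ` are sums, in the
commutative center, of the square-zero terms `a_j = d_j d_{j+g}`, `b_w = ±d ψ` and
`c_j = ψ_j ψ_{j+g}`. Hence `A^r B^s = r! s! ∑_{S,W} ∏_S a ∏_W b` over `r`-sets `S` of indices and
`s`-sets `W` of `b`-terms. A term dies as soon as some `b ∈ W` shares its index with `S`
(`a_j b_{j,·} = 0`), so a surviving `W` uses both `b`-terms of at most `g - r` indices. This kills
`A^r B^s` when `2r + s > 2g`; when `2r + s = 2g` only `W = Sᶜ × {±}` survives, with product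
`∏_{j ∉ S} (-a_j c_j)`.

For `2r + s < 2g`: left multiplication by a generator sends each `d_I x` (`x` a polynomial in the
`ψ`'s) to a multiple of some `d_J x'`, so every element expands as `∑_I d_I x_I`, and contracting
with the coordinates of `d_1, d_{g+1}, …, d_g, d_{2g}` in turn reads off `x_univ`. Rescaling the
`d`'s by `t` multiplies `A^r B^s` by `t^(2r+s)` but the `ω`-term by `t^(2g)`, so that term is zero.
-/

noncomputable section

namespace ZagierLemmaStmt

variable (g : ℕ)

/-- The exterior algebra `Λ(ℂ^{4g})` on generators `d_1,…,d_{2g},ψ_1,…,ψ_{2g}`: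
the index `Sum.inl (Sum.inl j)` is `d_{j+1}`, `Sum.inl (Sum.inr j)` is `d_{g+j+1}`,
`Sum.inr (Sum.inl j)` is `ψ_{j+1}` and `Sum.inr (Sum.inr j)` is `ψ_{g+j+1}`. -/
abbrev Λ := ExteriorAlgebra ℂ (((Fin g ⊕ Fin g) ⊕ (Fin g ⊕ Fin g)) → ℂ)

/-- The generator `d_i`. -/
def dgen (i : Fin g ⊕ Fin g) : Λ g :=
  ExteriorAlgebra.ι ℂ (Pi.single (Sum.inl i) 1)

/-- The generator `ψ_i`. -/
def psigen (i : Fin g ⊕ Fin g) : Λ g :=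
  ExteriorAlgebra.ι ℂ (Pi.single (Sum.inr i) 1)

/-- For a subset `I ⊆ {1,…,2g}`, the wedge `d_I` of the corresponding `d`-generators, taken
in the interleaved order `d_1, d_{g+1}, d_2, d_{g+2}, …, d_g, d_{2g}`; in particular
`dWedge g Finset.univ = ω = d_1∧d_{g+1}∧⋯∧d_g∧d_{2g}`. -/
def dWedge (I : Finset (Fin g ⊕ Fin g)) : Λ g :=
  (List.ofFn fun j : Fin g =>
    (if Sum.inl j ∈ I then dgen g (Sum.inl j) else 1) *
      (if Sum.inr j ∈ I then dgen g (Sum.inr j) else 1)).prod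

/-- `A = Σ_{j=1}^g d_j ∧ d_{j+g}`. -/
def Aelem : Λ g := ∑ j : Fin g, dgen g (Sum.inl j) * dgen g (Sum.inr j)

/-- `B = Σ_{j=1}^g (−d_j ∧ ψ_{j+g} + d_{j+g} ∧ ψ_j)`. -/
def Belem : Λ g :=
  ∑ j : Fin g, (-(dgen g (Sum.inl j) * psigen g (Sum.inr j))
    + dgen g (Sum.inr j) * psigen g (Sum.inl j))

/-- `γ = Σ_{j=1}^g ψ_j ∧ ψ_{j+g}`. -/
def gammaElem : Λ g := ∑ j : Fin g, psigen g (Sum.inl j) * psigen g (Sum.inr j)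

/-- `ω = d_1∧d_{g+1}∧d_2∧d_{g+2}∧⋯∧d_g∧d_{2g}`. -/
def omegaElem : Λ g :=
  (List.ofFn fun j : Fin g => dgen g (Sum.inl j) * dgen g (Sum.inr j)).prod

end ZagierLemmaStmt

section SquareZero

open Finset Nat

theorem add_pow_succ_of_mul_self_eq_zero {R : Type*} [CommSemiring R] {a : R} (b : R)
    (ha : a * a = 0) (n : ℕ) : (a + b) ^ (n + 1) = b ^ (n + 1) + (n + 1) • (a * b ^ n) := by
  induction n with
  | zero => simp [add_comm]
  | succ n ih =>
    calc (a + b) ^ (n + 1 + 1)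
        = b ^ (n + 1 + 1) + (n + 1 + 1) • (a * b ^ (n + 1)) + (n + 1) • (a * a * b ^ n) := by
          rw [pow_succ, ih]; ring
      _ = b ^ (n + 1 + 1) + (n + 1 + 1) • (a * b ^ (n + 1)) := by simp [ha]

theorem sum_pow_eq_factorial_smul_sum_powersetCard {R ι : Type*} [CommSemiring R]
    [DecidableEq ι] (x : ι → R) (s : Finset ι) (hx : ∀ i ∈ s, x i * x i = 0) (n : ℕ) :
    (∑ i ∈ s, x i) ^ n = n ! • ∑ T ∈ s.powersetCard n, ∏ i ∈ T, x i := by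
  induction s using Finset.induction_on generalizing n with
  | empty =>
    rcases n with _ | n
    · simp
    · rw [powersetCard_eq_empty.2 (by simp)]; simp
  | insert a s ha ih =>
    have ih' := ih fun i hi => hx i (mem_insert_of_mem hi)
    cases n with
    | zero => simp
    | succ n =>
      have hinj : Set.InjOn (insert a) (s.powersetCard n : Set (Finset ι)) :=
        fun S hS S' hS' h => by
          rw [← erase_insert fun h => ha ((mem_powersetCard.1 hS).1 h),
            ← erase_insert fun h => ha ((mem_powersetCard.1 hS').1 h), h]
      have hdisj : Disjoint (s.powersetCard (n + 1)) ((s.powersetCard n).image (insert a)) :=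
        disjoint_left.2 fun T hT hT' => by
          obtain ⟨S, -, rfl⟩ := mem_image.1 hT'
          exact ha ((mem_powersetCard.1 hT).1 (mem_insert_self a S))
      rw [sum_insert ha, add_pow_succ_of_mul_self_eq_zero _ (hx a (mem_insert_self a s)),
        powersetCard_succ_insert ha, sum_union hdisj, sum_image hinj, ih', ih']
      have : ∀ S ∈ s.powersetCard n, ∏ i ∈ insert a S, x i = x a * ∏ i ∈ S, x i :=
        fun S hS => prod_insert fun h => ha ((mem_powersetCard.1 hS).1 h)
      rw [sum_congr rfl this, ← mul_sum, Nat.factorial_succ]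
      simp only [smul_add, nsmul_eq_mul, Nat.cast_mul, Nat.cast_add, Nat.cast_one]
      ring

variable {R ι : Type*} [Fintype ι] [DecidableEq ι]

theorem sum_powersetCard_compl {M : Type*} [AddCommMonoid M] (F : Finset ι → M) {r p : ℕ}
    (h : r + p = Fintype.card ι) :
    ∑ S ∈ univ.powersetCard r, F Sᶜ = ∑ U ∈ univ.powersetCard p, F U := by
  have hcompl : ∀ {m n : ℕ}, m + n = Fintype.card ι →
      ∀ S ∈ (univ : Finset ι).powersetCard m, Sᶜ ∈ univ.powersetCard n := fun hmn S hS =>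
    mem_powersetCard.2 ⟨subset_univ _, by rw [card_compl, (mem_powersetCard.1 hS).2]; omega⟩
  exact sum_nbij' compl compl (hcompl h) (hcompl (by omega)) (fun S _ => compl_compl S)
    (fun U _ => compl_compl U) fun S _ => rfl

section CommSemiring

variable [CommSemiring R] {a : ι → R} {b : ι × Bool → R}

theorem sum_pow_mul_sum_pow_eq_sum_powersetCard (ha : ∀ j, a j * a j = 0)
    (hb : ∀ w, b w * b w = 0) (r s : ℕ) :
    (∑ j, a j) ^ r * (∑ w, b w) ^ s = (r ! * s !) • ∑ S ∈ univ.powersetCard r,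
      ∑ W ∈ univ.powersetCard s, (∏ j ∈ S, a j) * ∏ w ∈ W, b w := by
  rw [sum_pow_eq_factorial_smul_sum_powersetCard a _ fun j _ => ha j,
    sum_pow_eq_factorial_smul_sum_powersetCard b _ fun w _ => hb w, smul_mul_smul_comm,
    sum_mul_sum]

theorem subset_compl_product_of_prod_mul_prod_ne_zero (hab : ∀ j t, a j * b (j, t) = 0)
    {S : Finset ι} {W : Finset (ι × Bool)} (h : (∏ j ∈ S, a j) * ∏ w ∈ W, b w ≠ 0) :
    W ⊆ Sᶜ ×ˢ univ := by
  rintro ⟨j, t⟩ hjt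
  refine mem_product.2 ⟨mem_compl.2 fun hj => h ?_, mem_univ t⟩
  rw [← mul_prod_erase S a hj, ← mul_prod_erase W b hjt]
  calc _ = a j * b (j, t) * ((∏ i ∈ S.erase j, a i) * ∏ w ∈ W.erase (j, t), b w) := by ring
    _ = 0 := by rw [hab, zero_mul]

theorem sum_pow_mul_sum_pow_eq_zero (ha : ∀ j, a j * a j = 0) (hb : ∀ w, b w * b w = 0)
    (hab : ∀ j t, a j * b (j, t) = 0) {r s : ℕ} (h : 2 * Fintype.card ι < 2 * r + s) :
    (∑ j, a j) ^ r * (∑ w, b w) ^ s = 0 := by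
  rw [sum_pow_mul_sum_pow_eq_sum_powersetCard ha hb]
  refine smul_eq_zero_of_right _ (sum_eq_zero fun S hS => sum_eq_zero fun W hW => ?_)
  by_contra hne
  have := card_le_card (subset_compl_product_of_prod_mul_prod_ne_zero hab hne)
  rw [card_product, card_compl, (mem_powersetCard.1 hS).2, (mem_powersetCard.1 hW).2,
    Finset.card_univ, Fintype.card_bool] at this
  have := (mem_powersetCard.1 hS).2 ▸ card_le_univ S
  omega

end CommSemiring

theorem factorial_smul_sum_pow_mul_sum_pow [CommRing R] {a c : ι → R} {b : ι × Bool → R}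
    (ha : ∀ j, a j * a j = 0) (hb : ∀ w, b w * b w = 0) (hab : ∀ j t, a j * b (j, t) = 0)
    (hbb : ∀ j, b (j, true) * b (j, false) = -(a j * c j)) (hc : ∀ j, c j * c j = 0)
    {r p : ℕ} (h : r + p = Fintype.card ι) :
    p ! • ((∑ j, a j) ^ r * (∑ w, b w) ^ (2 * p))
      = (r ! * (2 * p) !) • ((∏ j, a j) * (-∑ j, c j) ^ p) := by
  have hterm : ∀ S ∈ univ.powersetCard r, ∑ W ∈ univ.powersetCard (2 * p),
      (∏ j ∈ S, a j) * ∏ w ∈ W, b w = (∏ j, a j) * ∏ j ∈ Sᶜ, -c j := by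
    intro S hS
    have hcard : #(Sᶜ ×ˢ (univ : Finset Bool)) = 2 * p := by
      rw [card_product, card_compl, (mem_powersetCard.1 hS).2, Finset.card_univ,
        Fintype.card_bool]
      omega
    rw [sum_eq_single_of_mem _ (mem_powersetCard.2 ⟨subset_univ _, hcard⟩)]
    · have hpair : ∏ w ∈ Sᶜ ×ˢ univ, b w = (∏ j ∈ Sᶜ, a j) * ∏ j ∈ Sᶜ, -c j := by
        rw [prod_product, ← prod_mul_distrib]
        refine prod_congr rfl fun j _ => ?_
        rw [Fintype.prod_bool, hbb, mul_neg]
      rw [hpair, ← mul_assoc, prod_mul_prod_compl]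
    · intro W hW hne
      by_contra hW0
      exact hne <| eq_of_subset_of_card_le
        (subset_compl_product_of_prod_mul_prod_ne_zero hab hW0)
        (by rw [hcard, (mem_powersetCard.1 hW).2])
  have hneg : -∑ j, c j = ∑ j, -c j := (sum_neg_distrib c).symm
  rw [sum_pow_mul_sum_pow_eq_sum_powersetCard ha hb, sum_congr rfl hterm, ← mul_sum,
    sum_powersetCard_compl (fun U => ∏ j ∈ U, -c j) h, hneg,
    sum_pow_eq_factorial_smul_sum_powersetCard _ _ fun j _ => by rw [neg_mul_neg, hc],
    mul_smul_comm, smul_comm]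

end SquareZero

namespace ExteriorAlgebra

open CliffordAlgebra

variable {R M : Type*} [CommRing R] [AddCommGroup M] [Module R M]

theorem ι_mul_eq_involute_mul (m : M) (x : ExteriorAlgebra R M) :
    ι R m * x = involute x * ι R m := by
  induction x using ExteriorAlgebra.induction with
  | algebraMap r => rw [AlgHom.commutes]; exact (Algebra.commutes r _).symm
  | ι v => rw [involute_ι, neg_mul, eq_neg_iff_add_eq_zero, ι_add_mul_swap]
  | mul x y hx hy => rw [← mul_assoc, hx, mul_assoc, hy, ← mul_assoc, map_mul]
  | add x y hx hy => rw [mul_add, hx, hy, map_add, add_mul]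

theorem ι_mul_ι_mem_center (u v : M) :
    ι R u * ι R v ∈ Subalgebra.center R (ExteriorAlgebra R M) :=
  Subalgebra.mem_center_iff.2 fun x => by
    symm
    rw [mul_assoc, ι_mul_eq_involute_mul v, ← mul_assoc, ι_mul_eq_involute_mul u,
      involute_involute, mul_assoc]

theorem ι_mul_ι_mul_ι_mul_ι (u v w z : M) :
    ι R u * ι R v * (ι R w * ι R z) = -(ι R u * ι R w * (ι R v * ι R z)) := by
  have h : ι R v * ι R w = -(ι R w * ι R v) := eq_neg_of_add_eq_zero_left (ι_add_mul_swap v w)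
  rw [mul_assoc, ← mul_assoc (ι R v), h, neg_mul, mul_neg, neg_inj]
  simp only [mul_assoc]

theorem ι_mul_ι_mul_ι_mul_ι_self_left (u v w : M) : ι R u * ι R v * (ι R u * ι R w) = 0 := by
  rw [ι_mul_ι_mul_ι_mul_ι, ι_sq_zero, zero_mul, neg_zero]

theorem ι_mul_ι_mul_ι_mul_ι_self_right (u v w : M) : ι R u * ι R v * (ι R v * ι R w) = 0 := by
  rw [mul_assoc, ← mul_assoc (ι R v), ι_sq_zero, zero_mul, mul_zero]

theorem contractLeft_mul_of_mem_adjoin_ker (d : Module.Dual R M) {x : ExteriorAlgebra R M}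
    (hx : x ∈ Algebra.adjoin R (ι R '' (LinearMap.ker d : Set M))) (y : ExteriorAlgebra R M) :
    contractLeft d (x * y) = involute x * contractLeft d y := by
  induction hx using Algebra.adjoin_induction generalizing y with
  | mem x hx =>
    obtain ⟨m, hm, rfl⟩ := hx
    rw [contractLeft_ι_mul, LinearMap.mem_ker.1 hm, zero_smul, zero_sub, involute_ι, neg_mul]
  | algebraMap r => rw [AlgHom.commutes, ← Algebra.smul_def, ← Algebra.smul_def, map_smul]
  | add x x' _ _ hx hx' => rw [add_mul, map_add, hx, hx', map_add, add_mul]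
  | mul x x' _ _ hx hx' => rw [mul_assoc, hx, hx', map_mul, mul_assoc]

theorem contractLeft_eq_zero_of_mem_adjoin_ker (d : Module.Dual R M) {x : ExteriorAlgebra R M}
    (hx : x ∈ Algebra.adjoin R (ι R '' (LinearMap.ker d : Set M))) : contractLeft d x = 0 := by
  simpa [contractLeft_one] using contractLeft_mul_of_mem_adjoin_ker d hx 1

end ExteriorAlgebra

namespace ZagierLemmaStmt

open ExteriorAlgebra CliffordAlgebra Finset Nat

variable {g : ℕ}

section Center

def aCenter (j : Fin g) : Subalgebra.center ℂ (Λ g) :=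
  ⟨dgen g (Sum.inl j) * dgen g (Sum.inr j), ι_mul_ι_mem_center _ _⟩

def bCenter : Fin g × Bool → Subalgebra.center ℂ (Λ g)
  | (j, true) =>
    ⟨-(dgen g (Sum.inl j) * psigen g (Sum.inr j)), neg_mem (ι_mul_ι_mem_center _ _)⟩
  | (j, false) => ⟨dgen g (Sum.inr j) * psigen g (Sum.inl j), ι_mul_ι_mem_center _ _⟩

def cCenter (j : Fin g) : Subalgebra.center ℂ (Λ g) :=
  ⟨psigen g (Sum.inl j) * psigen g (Sum.inr j), ι_mul_ι_mem_center _ _⟩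

theorem aCenter_mul_self (j : Fin g) : aCenter j * aCenter j = 0 :=
  Subtype.ext (ι_mul_ι_mul_ι_mul_ι_self_left _ _ _)

theorem bCenter_mul_self : ∀ w : Fin g × Bool, bCenter w * bCenter w = 0
  | (_, true) => Subtype.ext <| (neg_mul_neg _ _).trans (ι_mul_ι_mul_ι_mul_ι_self_left _ _ _)
  | (_, false) => Subtype.ext (ι_mul_ι_mul_ι_mul_ι_self_left _ _ _)

theorem cCenter_mul_self (j : Fin g) : cCenter j * cCenter j = 0 :=
  Subtype.ext (ι_mul_ι_mul_ι_mul_ι_self_left _ _ _)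

theorem aCenter_mul_bCenter : ∀ (j : Fin g) (t : Bool), aCenter j * bCenter (j, t) = 0
  | _, true => Subtype.ext <| (mul_neg _ _).trans <|
      neg_eq_zero.2 (ι_mul_ι_mul_ι_mul_ι_self_left _ _ _)
  | _, false => Subtype.ext (ι_mul_ι_mul_ι_mul_ι_self_right _ _ _)

theorem bCenter_mul_bCenter (j : Fin g) :
    bCenter (j, true) * bCenter (j, false) = -(aCenter j * cCenter j) := by
  refine Subtype.ext ?_
  change -(dgen g _ * psigen g _) * (dgen g _ * psigen g _)
    = -(dgen g _ * dgen g _ * (psigen g _ * psigen g _))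
  rw [neg_mul, dgen, dgen, psigen, psigen, ι_mul_ι_mul_ι_mul_ι, neg_neg, ← mul_neg,
    ← eq_neg_of_add_eq_zero_left (ι_add_mul_swap _ _)]

theorem Aelem_eq : Aelem g = (Subalgebra.center ℂ (Λ g)).val (∑ j, aCenter j) := by
  rw [map_sum]; rfl

theorem Belem_eq : Belem g = (Subalgebra.center ℂ (Λ g)).val (∑ w, bCenter w) := by
  rw [map_sum, Fintype.sum_prod_type]
  exact sum_congr rfl fun j _ => by rw [Fintype.sum_bool]; rfl

theorem gammaElem_eq : gammaElem g = (Subalgebra.center ℂ (Λ g)).val (∑ j, cCenter j) := by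
  rw [map_sum]; rfl

theorem omegaElem_eq : omegaElem g = (Subalgebra.center ℂ (Λ g)).val (∏ j, aCenter j) := by
  rw [← List.prod_ofFn, map_list_prod, List.map_ofFn]; rfl

theorem Aelem_pow_mul_Belem_pow_eq_zero {r s : ℕ} (h : 2 * g < 2 * r + s) :
    Aelem g ^ r * Belem g ^ s = 0 := by
  rw [Aelem_eq, Belem_eq, ← map_pow, ← map_pow, ← map_mul,
    sum_pow_mul_sum_pow_eq_zero aCenter_mul_self bCenter_mul_self aCenter_mul_bCenter
      (by simpa using h), map_zero]

theorem inv_factorial_smul_Aelem_pow_mul_Belem_pow {r p : ℕ} (h : r + p = g) :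
    ((r ! : ℂ)⁻¹ * ((2 * p) ! : ℂ)⁻¹) • (Aelem g ^ r * Belem g ^ (2 * p))
      = (p ! : ℂ)⁻¹ • (omegaElem g * (-gammaElem g) ^ p) := by
  have key : p ! • (Aelem g ^ r * Belem g ^ (2 * p))
      = (r ! * (2 * p) !) • (omegaElem g * (-gammaElem g) ^ p) := by
    rw [Aelem_eq, Belem_eq, omegaElem_eq, gammaElem_eq, ← map_neg, ← map_pow, ← map_pow,
      ← map_pow, ← map_mul, ← map_mul, ← map_nsmul, ← map_nsmul,
      factorial_smul_sum_pow_mul_sum_pow aCenter_mul_self bCenter_mul_self aCenter_mul_bCenter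
        bCenter_mul_bCenter cCenter_mul_self (by simpa using h)]
    rfl
  rw [← Nat.cast_smul_eq_nsmul ℂ, ← Nat.cast_smul_eq_nsmul ℂ] at key
  have hfac : ∀ n : ℕ, (n ! : ℂ) ≠ 0 := fun n => Nat.cast_ne_zero.2 (factorial_ne_zero n)
  rw [eq_inv_smul_iff₀ (hfac p), smul_comm, key, smul_smul, Nat.cast_mul,
    mul_mul_mul_comm, inv_mul_cancel₀ (hfac r), inv_mul_cancel₀ (hfac _), one_mul, one_smul]

end Center

section Monomials

abbrev psiSubalgebra (g : ℕ) : Subalgebra ℂ (Λ g) := Algebra.adjoin ℂ (Set.range (psigen g))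

def dProd (I : Finset (Fin g ⊕ Fin g)) (l : List (Fin g ⊕ Fin g)) : Λ g :=
  (l.map fun i => if i ∈ I then dgen g i else 1).prod

def dOrder (g : ℕ) : List (Fin g ⊕ Fin g) :=
  (List.finRange g).flatMap fun j => [Sum.inl j, Sum.inr j]

theorem mem_dOrder (i : Fin g ⊕ Fin g) : i ∈ dOrder g := by
  cases i <;> simp [dOrder]

theorem nodup_dOrder : (dOrder g).Nodup :=
  List.nodup_flatMap.2
    ⟨fun j _ => by simp, (List.nodup_finRange g).imp fun hne => by simp [hne.symm]⟩

theorem length_dOrder : (dOrder g).length = 2 * g := by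
  simp [dOrder, List.length_flatMap, mul_comm]

theorem dWedge_eq_dProd (I : Finset (Fin g ⊕ Fin g)) : dWedge g I = dProd I (dOrder g) := by
  simp [dWedge, dProd, dOrder, List.ofFn_eq_map, List.flatMap_def, List.map_flatten,
    List.prod_flatten, Function.comp_def]

theorem dProd_append (I : Finset (Fin g ⊕ Fin g)) (l₁ l₂ : List (Fin g ⊕ Fin g)) :
    dProd I (l₁ ++ l₂) = dProd I l₁ * dProd I l₂ := by
  simp [dProd]

theorem dProd_cons (I : Finset (Fin g ⊕ Fin g)) (i : Fin g ⊕ Fin g) (l : List (Fin g ⊕ Fin g)) :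
    dProd I (i :: l) = (if i ∈ I then dgen g i else 1) * dProd I l := by
  simp [dProd]

theorem dProd_congr {I J : Finset (Fin g ⊕ Fin g)} {l : List (Fin g ⊕ Fin g)}
    (h : ∀ i ∈ l, i ∈ I ↔ i ∈ J) : dProd I l = dProd J l :=
  congrArg List.prod (List.map_congr_left fun i hi => by simp only [h i hi])

theorem map_dProd {f : Λ g →ₐ[ℂ] Λ g} {t : ℂ} (hf : ∀ i, f (dgen g i) = t • dgen g i)
    (I : Finset (Fin g ⊕ Fin g)) (l : List (Fin g ⊕ Fin g)) :
    f (dProd I l) = t ^ l.countP (· ∈ I) • dProd I l := by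
  induction l with
  | nil => simp [dProd]
  | cons i l ih =>
    simp only [dProd, List.map_cons, List.prod_cons, map_mul, List.countP_cons] at ih ⊢
    by_cases hi : i ∈ I
    · simp [hi, hf, ih, smul_smul, pow_succ]
    · simp [hi, ih]

theorem involute_dProd (I : Finset (Fin g ⊕ Fin g)) (l : List (Fin g ⊕ Fin g)) :
    involute (dProd I l) = (-1 : ℂ) ^ l.countP (· ∈ I) • dProd I l :=
  map_dProd (fun i => by rw [dgen, involute_ι, neg_one_smul]) I l

theorem dgen_mul_dProd {l : List (Fin g ⊕ Fin g)} (hl : l.Nodup) {i : Fin g ⊕ Fin g} (hi : i ∈ l)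
    (I : Finset (Fin g ⊕ Fin g)) : ∃ c : ℂ, dgen g i * dProd I l = c • dProd (insert i I) l := by
  obtain ⟨l₁, l₂, rfl⟩ := List.append_of_mem hi
  have hi' : i ∉ l₁ ++ l₂ := (List.nodup_cons.1 (List.nodup_middle.1 hl)).1
  have hinsert : ∀ l', (∀ j ∈ l', j ∈ l₁ ++ l₂) → dProd I l' = dProd (insert i I) l' :=
    fun l' hl' => dProd_congr fun j hj => by
      rw [mem_insert, or_iff_right]; rintro rfl; exact hi' (hl' _ hj)
  have hcomm :
      dgen g i * dProd I l₁ = (-1 : ℂ) ^ l₁.countP (· ∈ I) • (dProd I l₁ * dgen g i) := by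
    rw [dgen, ι_mul_eq_involute_mul, ← dgen, involute_dProd, smul_mul_assoc]
  rw [dProd_append, dProd_append, dProd_cons, dProd_cons, ← mul_assoc, hcomm,
    hinsert l₁ fun j hj => List.mem_append_left _ hj,
    hinsert l₂ fun j hj => List.mem_append_right _ hj, if_pos (mem_insert_self i I)]
  by_cases hiI : i ∈ I
  · refine ⟨0, ?_⟩
    rw [if_pos hiI, zero_smul, smul_mul_assoc, mul_assoc, ← mul_assoc (dgen g i), dgen,
      ι_sq_zero, zero_mul, mul_zero, smul_zero]
  · exact ⟨_, by rw [if_neg hiI, one_mul, smul_mul_assoc, mul_assoc]⟩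

end Monomials

section Expansion

def dComponent (I : Finset (Fin g ⊕ Fin g)) : Submodule ℂ (Λ g) :=
  (Subalgebra.toSubmodule (psiSubalgebra g)).map (LinearMap.mulLeft ℂ (dWedge g I))

theorem dWedge_empty : dWedge g ∅ = 1 := by
  simp [dWedge]

theorem dgen_mul_dWedge (i : Fin g ⊕ Fin g) (I : Finset (Fin g ⊕ Fin g)) :
    ∃ c : ℂ, dgen g i * dWedge g I = c • dWedge g (insert i I) := by
  simpa only [dWedge_eq_dProd] using dgen_mul_dProd nodup_dOrder (mem_dOrder i) I

theorem psigen_mul_dWedge (i : Fin g ⊕ Fin g) (I : Finset (Fin g ⊕ Fin g)) :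
    ∃ c : ℂ, psigen g i * dWedge g I = c • (dWedge g I * psigen g i) := by
  rw [psigen, ι_mul_eq_involute_mul, dWedge_eq_dProd, involute_dProd, smul_mul_assoc]
  exact ⟨_, rfl⟩

theorem ι_single_mul_mem_iSup_dComponent (k : (Fin g ⊕ Fin g) ⊕ (Fin g ⊕ Fin g)) {y : Λ g}
    (hy : y ∈ ⨆ I, dComponent I) : ι ℂ (Pi.single k 1) * y ∈ ⨆ I, dComponent I := by
  induction hy using Submodule.iSup_induction' with
  | mem I y hy =>
    obtain ⟨w, hw, rfl⟩ := hy
    rcases k with i | i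
    · obtain ⟨c, hc⟩ := dgen_mul_dWedge i I
      refine Submodule.mem_iSup_of_mem (insert i I) ⟨c • w, Submodule.smul_mem _ c hw, ?_⟩
      change dWedge g _ * (c • w) = ι ℂ _ * (dWedge g I * w)
      rw [← mul_assoc, ← dgen, hc, mul_smul_comm, smul_mul_assoc]
    · obtain ⟨c, hc⟩ := psigen_mul_dWedge i I
      refine Submodule.mem_iSup_of_mem I
        ⟨c • (psigen g i * w), Submodule.smul_mem _ c <| (Subalgebra.mem_toSubmodule _).2 <|
          mul_mem (Algebra.subset_adjoin ⟨i, rfl⟩) ((Subalgebra.mem_toSubmodule _).1 hw), ?_⟩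
      change dWedge g _ * (c • (psigen g i * w)) = ι ℂ _ * (dWedge g I * w)
      rw [← mul_assoc, ← psigen, hc, mul_smul_comm, smul_mul_assoc, mul_assoc]
  | zero => simp
  | add y z _ _ hy hz => rw [mul_add]; exact add_mem hy hz

theorem iSup_dComponent : ⨆ I, dComponent (g := g) I = ⊤ := by
  refine Submodule.eq_top_iff'.2 fun y => ?_
  induction y using CliffordAlgebra.left_induction with
  | algebraMap r =>
    exact Submodule.mem_iSup_of_mem ∅ ⟨algebraMap ℂ _ r, Subalgebra.algebraMap_mem _ r,
      by simp [dWedge_empty]⟩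
  | add x y hx hy => exact add_mem hx hy
  | ι_mul x m hx =>
    rw [← (Pi.basisFun ℂ _).sum_repr m, map_sum, sum_mul]
    refine sum_mem fun k _ => ?_
    rw [map_smul, smul_mul_assoc, Pi.basisFun_apply]
    exact Submodule.smul_mem _ _ (ι_single_mul_mem_iSup_dComponent k hx)

theorem exists_sum_dWedge_mul (y : Λ g) :
    ∃ x : Finset (Fin g ⊕ Fin g) → Λ g,
      (∀ I, x I ∈ psiSubalgebra g) ∧ y = ∑ I, dWedge g I * x I := by
  have hy : y ∈ ⨆ I ∈ (univ : Finset _), dComponent I := by simp [iSup_dComponent]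
  obtain ⟨μ, hμ⟩ := (Submodule.mem_iSup_finset_iff_exists_sum _ y).1 hy
  choose x hx hxμ using fun I => Submodule.mem_map.1 (μ I).2
  exact ⟨x, hx, hμ.symm.trans (sum_congr rfl fun I _ => (hxμ I).symm)⟩

end Expansion

section TopCoefficient

def dCoord (i : Fin g ⊕ Fin g) : Module.Dual ℂ (((Fin g ⊕ Fin g) ⊕ (Fin g ⊕ Fin g)) → ℂ) :=
  LinearMap.proj (Sum.inl i)

def dContractList : List (Fin g ⊕ Fin g) → Λ g →ₗ[ℂ] Λ g
  | [] => LinearMap.id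
  | i :: l => dContractList l ∘ₗ contractLeft (Q := 0) (dCoord i)

abbrev dCoordKerSubalgebra (i : Fin g ⊕ Fin g) : Subalgebra ℂ (Λ g) :=
  Algebra.adjoin ℂ (ι ℂ '' (LinearMap.ker (dCoord i) : Set _))

theorem psiSubalgebra_le_dCoordKerSubalgebra (i : Fin g ⊕ Fin g) :
    psiSubalgebra g ≤ dCoordKerSubalgebra i :=
  Algebra.adjoin_mono <| Set.range_subset_iff.2 fun k =>
    ⟨Pi.single (Sum.inr k) 1, by simp [dCoord], rfl⟩

theorem dProd_mem_dCoordKerSubalgebra {i : Fin g ⊕ Fin g} {l : List (Fin g ⊕ Fin g)}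
    (hi : i ∉ l) (I : Finset (Fin g ⊕ Fin g)) : dProd I l ∈ dCoordKerSubalgebra i := by
  refine Subalgebra.list_prod_mem _ fun x hx => ?_
  obtain ⟨j, hj, rfl⟩ := List.mem_map.1 hx
  split_ifs
  · refine Algebra.subset_adjoin ⟨Pi.single (Sum.inl j) 1, ?_, rfl⟩
    simp [dCoord, show i ≠ j by rintro rfl; exact hi hj]
  · exact one_mem _

theorem dContractList_dProd_mul {l : List (Fin g ⊕ Fin g)} (hl : l.Nodup)
    (I : Finset (Fin g ⊕ Fin g)) {x : Λ g} (hx : x ∈ psiSubalgebra g) :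
    dContractList l (dProd I l * x) = if ∀ i ∈ l, i ∈ I then x else 0 := by
  induction l with
  | nil => simp [dContractList, dProd]
  | cons i l ih =>
    obtain ⟨hil, hl⟩ := List.nodup_cons.1 hl
    have hker : dProd I l * x ∈ dCoordKerSubalgebra i :=
      mul_mem (dProd_mem_dCoordKerSubalgebra hil I) (psiSubalgebra_le_dCoordKerSubalgebra i hx)
    have hzero := contractLeft_eq_zero_of_mem_adjoin_ker _ hker
    rw [dContractList, LinearMap.comp_apply, dProd_cons, mul_assoc]
    by_cases hiI : i ∈ I
    · rw [if_pos hiI, dgen, contractLeft_ι_mul, hzero, mul_zero, sub_zero, dCoord,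
        LinearMap.proj_apply, Pi.single_eq_same, one_smul, ih hl]
      exact if_congr (by simp [hiI]) rfl rfl
    · rw [if_neg hiI, one_mul, hzero, map_zero,
        if_neg fun h => hiI (h i (List.mem_cons_self ..))]

theorem dContractList_dOrder_dWedge_mul (I : Finset (Fin g ⊕ Fin g)) {x : Λ g}
    (hx : x ∈ psiSubalgebra g) :
    dContractList (dOrder g) (dWedge g I * x) = if I = univ then x else 0 := by
  rw [dWedge_eq_dProd, dContractList_dProd_mul nodup_dOrder I hx]
  exact if_congr
    ⟨fun h => eq_univ_of_forall fun i => h i (mem_dOrder i), fun h i _ => h ▸ mem_univ i⟩ rfl rfl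

end TopCoefficient

section Scaling

def dScale (t : ℂ) : Λ g →ₐ[ℂ] Λ g :=
  ExteriorAlgebra.map (LinearMap.mulLeft ℂ (Sum.elim (fun _ => t) 1))

theorem dScale_dgen (t : ℂ) (i : Fin g ⊕ Fin g) : dScale t (dgen g i) = t • dgen g i := by
  rw [dScale, dgen, ExteriorAlgebra.map_apply_ι, ← map_smul, LinearMap.mulLeft_apply,
    ← Pi.single_mul_right, ← Pi.single_smul']
  simp

theorem dScale_psigen (t : ℂ) (i : Fin g ⊕ Fin g) : dScale t (psigen g i) = psigen g i := by
  rw [dScale, psigen, ExteriorAlgebra.map_apply_ι, LinearMap.mulLeft_apply,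
    ← Pi.single_mul_right]
  simp

theorem dScale_of_mem_psiSubalgebra (t : ℂ) {x : Λ g} (hx : x ∈ psiSubalgebra g) :
    dScale t x = x := by
  have h : Set.EqOn (dScale t) (AlgHom.id ℂ (Λ g)) (psiSubalgebra g) :=
    AlgHom.eqOn_adjoin_iff.2 (by rintro _ ⟨i, rfl⟩; exact dScale_psigen t i)
  exact h hx

theorem dScale_Aelem (t : ℂ) : dScale t (Aelem g) = t ^ 2 • Aelem g := by
  simp only [Aelem, map_sum, map_mul, dScale_dgen, smul_mul_smul_comm, smul_sum, sq]

theorem dScale_Belem (t : ℂ) : dScale t (Belem g) = t • Belem g := by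
  simp only [Belem, map_sum, map_add, map_neg, map_mul, dScale_dgen, dScale_psigen,
    smul_mul_assoc, smul_sum, smul_add, smul_neg]

theorem dScale_Aelem_pow_mul_Belem_pow (t : ℂ) (r s : ℕ) :
    dScale t (Aelem g ^ r * Belem g ^ s) = t ^ (2 * r + s) • (Aelem g ^ r * Belem g ^ s) := by
  rw [map_mul, map_pow, map_pow, dScale_Aelem, dScale_Belem, smul_pow, smul_pow,
    smul_mul_smul_comm, ← pow_mul, ← pow_add]

theorem coeff_univ_eq_zero_of_dScale_eq_pow_smul {x : Finset (Fin g ⊕ Fin g) → Λ g}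
    (hx : ∀ I, x I ∈ psiSubalgebra g) {t : ℂ} {k : ℕ} (hk : t ^ k ≠ t ^ (2 * g))
    (h : dScale t (∑ I, dWedge g I * x I) = t ^ k • ∑ I, dWedge g I * x I) : x univ = 0 := by
  have hscale : ∀ I, dContractList (dOrder g) (dScale t (dWedge g I * x I))
      = if I = univ then t ^ (2 * g) • x I else 0 := by
    intro I
    rw [map_mul, dWedge_eq_dProd, map_dProd (dScale_dgen t),
      dScale_of_mem_psiSubalgebra t (hx I), smul_mul_assoc, map_smul, ← dWedge_eq_dProd,
      dContractList_dOrder_dWedge_mul I (hx I)]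
    split_ifs with hI
    · rw [hI, List.countP_eq_length.2 fun _ _ => by simp, length_dOrder]
    · exact smul_zero _
  have h' := congrArg (dContractList (dOrder g)) h
  simp only [map_sum, map_smul, hscale, dContractList_dOrder_dWedge_mul _ (hx _),
    sum_ite_eq', mem_univ, if_true] at h'
  exact (smul_eq_zero.1 (by rw [sub_smul, h', sub_self])).resolve_left (sub_ne_zero.2 hk.symm)

end Scaling

theorem zagier_slant_product_lemma_general (g : ℕ) (r s : ℕ) :
    (2 * r + s = 2 * g → ∃ p : ℕ, s = 2 * p ∧
      ((r.factorial : ℂ)⁻¹ * (s.factorial : ℂ)⁻¹) • (Aelem g ^ r * Belem g ^ s)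
        = (p.factorial : ℂ)⁻¹ • (omegaElem g * (-gammaElem g) ^ p)) ∧
    (2 * g < 2 * r + s → Aelem g ^ r * Belem g ^ s = 0) ∧
    (2 * r + s < 2 * g →
      (∃ x : Finset (Fin g ⊕ Fin g) → Λ g,
        (∀ I, x I ∈ Algebra.adjoin ℂ (Set.range (psigen g))) ∧
        ((r.factorial : ℂ)⁻¹ * (s.factorial : ℂ)⁻¹) • (Aelem g ^ r * Belem g ^ s)
          = ∑ I : Finset (Fin g ⊕ Fin g), dWedge g I * x I) ∧
      (∀ x : Finset (Fin g ⊕ Fin g) → Λ g,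
        (∀ I, x I ∈ Algebra.adjoin ℂ (Set.range (psigen g))) →
        ((r.factorial : ℂ)⁻¹ * (s.factorial : ℂ)⁻¹) • (Aelem g ^ r * Belem g ^ s)
          = (∑ I : Finset (Fin g ⊕ Fin g), dWedge g I * x I) →
        x Finset.univ = 0)) := by
  refine ⟨fun h => ?_, Aelem_pow_mul_Belem_pow_eq_zero, fun h => ⟨exists_sum_dWedge_mul _, ?_⟩⟩
  · obtain ⟨p, rfl⟩ : ∃ p, s = 2 * p := ⟨g - r, by omega⟩
    exact ⟨p, rfl, inv_factorial_smul_Aelem_pow_mul_Belem_pow (by omega)⟩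
  · intro x hx hsum
    refine coeff_univ_eq_zero_of_dScale_eq_pow_smul hx (t := 2) (k := 2 * r + s) ?_ ?_
    · exact_mod_cast (Nat.pow_right_injective le_rfl).ne h.ne
    · rw [← hsum, map_smul, dScale_Aelem_pow_mul_Belem_pow, smul_comm]

/-- **Zagier's lemma** (the exterior-algebra model of Lemma 3.6 of the paper).
(i) If `2r + s = 2g` then `s = 2p` is even and `(A^r/r!)∧(B^s/s!) = ω∧((−γ)^p/p!)`;
(ii) if `2r + s > 2g` then `A^r∧B^s = 0`;
(iii) if `2r + s < 2g` then `(A^r/r!)∧(B^s/s!)` has a (unique) expansion `Σ_I d_I∧x_I`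
with each `x_I` in the subalgebra generated by the `ψ`'s, and in any such expansion the
coefficient `x_univ` of the top monomial `ω` vanishes. -/
theorem zagier_slant_product_lemma (g : ℕ) (hg : 1 ≤ g) (r s : ℕ) :
    (2 * r + s = 2 * g → ∃ p : ℕ, s = 2 * p ∧
      ((r.factorial : ℂ)⁻¹ * (s.factorial : ℂ)⁻¹) • (Aelem g ^ r * Belem g ^ s)
        = (p.factorial : ℂ)⁻¹ • (omegaElem g * (-gammaElem g) ^ p)) ∧
    (2 * g < 2 * r + s → Aelem g ^ r * Belem g ^ s = 0) ∧
    (2 * r + s < 2 * g →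
      (∃ x : Finset (Fin g ⊕ Fin g) → Λ g,
        (∀ I, x I ∈ Algebra.adjoin ℂ (Set.range (psigen g))) ∧
        ((r.factorial : ℂ)⁻¹ * (s.factorial : ℂ)⁻¹) • (Aelem g ^ r * Belem g ^ s)
          = ∑ I : Finset (Fin g ⊕ Fin g), dWedge g I * x I) ∧
      (∀ x : Finset (Fin g ⊕ Fin g) → Λ g,
        (∀ I, x I ∈ Algebra.adjoin ℂ (Set.range (psigen g))) →
        ((r.factorial : ℂ)⁻¹ * (s.factorial : ℂ)⁻¹) • (Aelem g ^ r * Belem g ^ s)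
          = (∑ I : Finset (Fin g ⊕ Fin g), dWedge g I * x I) →
        x Finset.univ = 0)) :=
  zagier_slant_product_lemma_general g r s

end ZagierLemmaStmt
end
end

section
/- Let U and V be finite-dimensional complex vector spaces, let S ∈ End(U) and T ∈ End(V), let m : U × U → V be a bilinear map satisfying m(S u, u′) + m(u, S u′) = T(m(u, u′)) for all u, u′ ∈ U, and let e : V → ℂ be a linear functional such that the bilinear form (u, u′) ↦ e(m(u, u′)) on U is nondegenerate. Then for every eigenvalue λ of S there exists an eigenvalue μ of S such that λ + μ is an eigenvalue of T. -/
/-! Pick an eigenvector `u` of `S` for `λ`. The identity `T (m u w) = m u (S w) + λ • m u w` says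
that `m u` intertwines `S + λ` with `T`, so it carries the generalized `μ`-eigenspace of `S` into
the generalized `(μ + λ)`-eigenspace of `T`. Nondegeneracy makes `m u` nonzero, and since the
generalized eigenspaces of `S` span `U`, `m u` is nonzero on one of them. -/

namespace Module.End

theorem hasEigenvalue_of_maxGenEigenspace_ne_bot {R M : Type*} [CommRing R] [AddCommGroup M]
    [Module R M] {f : End R M} {μ : R} (h : f.maxGenEigenspace μ ≠ ⊥) : f.HasEigenvalue μ :=
  HasUnifEigenvalue.lt zero_lt_one h

theorem map_maxGenEigenspace_le_of_apply_eq_add_smul {R M N : Type*} [CommRing R]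
    [AddCommGroup M] [Module R M] [AddCommGroup N] [Module R N]
    {S : End R M} {T : End R N} {f : M →ₗ[R] N} {c : R}
    (h : ∀ x, T (f x) = f (S x) + c • f x) (μ : R) :
    (S.maxGenEigenspace μ).map f ≤ T.maxGenEigenspace (μ + c) := by
  have hcomp : (T - (μ + c) • 1) ∘ₗ f = f ∘ₗ (S - μ • 1) := by
    ext x
    simp only [LinearMap.comp_apply, LinearMap.sub_apply, LinearMap.smul_apply, one_apply, h,
      map_sub, map_smul, add_smul, LinearMap.add_apply]
    abel
  rintro _ ⟨x, hx, rfl⟩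
  obtain ⟨k, hk⟩ := (mem_maxGenEigenspace S μ x).mp hx
  refine (mem_maxGenEigenspace T (μ + c) (f x)).mpr ⟨k, ?_⟩
  rw [← LinearMap.comp_apply, commute_pow_left_of_commute hcomp k, LinearMap.comp_apply, hk,
    map_zero]

theorem exists_map_maxGenEigenspace_ne_bot {K M N : Type*} [Field K] [IsAlgClosed K]
    [AddCommGroup M] [Module K M] [FiniteDimensional K M] [AddCommGroup N] [Module K N]
    (S : End K M) {f : M →ₗ[K] N} (hf : f ≠ 0) : ∃ μ, (S.maxGenEigenspace μ).map f ≠ ⊥ := by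
  by_contra! h
  refine hf (LinearMap.ker_eq_top.mp (top_le_iff.mp ?_))
  rw [← iSup_maxGenEigenspace_eq_top S]
  exact iSup_le fun μ => Submodule.map_le_iff_le_comap.mp (h μ).le

end Module.End

theorem eigenvalue_sum_transfer_general
    (U V : Type*) [AddCommGroup U] [Module ℂ U] [FiniteDimensional ℂ U]
    [AddCommGroup V] [Module ℂ V]
    (S : U →ₗ[ℂ] U) (T : V →ₗ[ℂ] V)
    (m : U →ₗ[ℂ] U →ₗ[ℂ] V)
    (hm : ∀ u u' : U, m (S u) u' + m u (S u') = T (m u u'))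
    (e : V →ₗ[ℂ] ℂ)
    (hleft : ∀ u : U, (∀ u' : U, e (m u u') = 0) → u = 0) :
    ∀ lam : ℂ, Module.End.HasEigenvalue S lam →
      ∃ mu : ℂ, Module.End.HasEigenvalue S mu ∧
        Module.End.HasEigenvalue T (lam + mu) := by
  intro lam hlam
  obtain ⟨u, hu⟩ := hlam.exists_hasEigenvector
  have hpair_ne_zero : m u ≠ 0 := fun h => hu.2 (hleft u fun u' => by simp [h])
  have hintertwine : ∀ w, T (m u w) = m u (S w) + lam • m u w := fun w => by
    rw [← hm, hu.apply_eq_smul, map_smul, LinearMap.smul_apply, add_comm]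
  obtain ⟨mu, hne⟩ := Module.End.exists_map_maxGenEigenspace_ne_bot S hpair_ne_zero
  refine ⟨mu, Module.End.hasEigenvalue_of_maxGenEigenspace_ne_bot
    fun h => hne (by rw [h, Submodule.map_bot]), ?_⟩
  rw [add_comm]
  exact Module.End.hasEigenvalue_of_maxGenEigenspace_ne_bot <| ne_bot_of_le_ne_bot hne <|
    Module.End.map_maxGenEigenspace_le_of_apply_eq_add_smul hintertwine mu

/-- **Spectral transfer through a nondegenerate intertwining pairing**
(the abstract argument in Lemma 5.2 of the paper).  Let `U`, `V` be finite-dimensional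
complex vector spaces, `S ∈ End(U)`, `T ∈ End(V)`, `m : U × U → V` bilinear with
`m(Su, u') + m(u, Su') = T(m(u, u'))`, and `e : V → ℂ` linear such that
`(u, u') ↦ e(m(u, u'))` is a nondegenerate bilinear form on `U`.  Then for every
eigenvalue `λ` of `S` there is an eigenvalue `μ` of `S` with `λ + μ` an eigenvalue of `T`. -/
theorem eigenvalue_sum_transfer
    (U V : Type*) [AddCommGroup U] [Module ℂ U] [FiniteDimensional ℂ U]
    [AddCommGroup V] [Module ℂ V] [FiniteDimensional ℂ V]
    (S : U →ₗ[ℂ] U) (T : V →ₗ[ℂ] V)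
    (m : U →ₗ[ℂ] U →ₗ[ℂ] V)
    (hm : ∀ u u' : U, m (S u) u' + m u (S u') = T (m u u'))
    (e : V →ₗ[ℂ] ℂ)
    (hleft : ∀ u : U, (∀ u' : U, e (m u u') = 0) → u = 0)
    (hright : ∀ u' : U, (∀ u : U, e (m u u') = 0) → u' = 0) :
    ∀ lam : ℂ, Module.End.HasEigenvalue S lam →
      ∃ mu : ℂ, Module.End.HasEigenvalue S mu ∧
        Module.End.HasEigenvalue T (lam + mu) :=
  eigenvalue_sum_transfer_general U V S T m hm e hleft
end
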